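/- On Z₁ := ℝⁿ × ℝⁿ × ℝ₊ with composability and product m̃ as in formula (27) (composable iff x₂ = s₁·x₁ − (2/(1+‖x₁‖²))·ẋ₁, product (x₁, s₂·ẋ₁ + ((1+‖x₁‖²)/(1+‖x₂‖²))·ẋ₂, s₁·s₂)), and with ŝ(x, ẋ, s) := (s·x − (2/(1+‖x‖²))·ẋ, −((1+‖s·x − (2/(1+‖x‖²))·ẋ‖²)/((1+‖x‖²)·s))·ẋ, 1/s): for every γ = (x, ẋ, s) ∈ Z₁, the pair (γ, ŝ(γ)) is composable and m̃(γ, ŝ(γ)) = (x, 0, 1), i.e. the product of an element with its inverse is the unit at its left projection. -/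

import Mathlib

/-- Composability in the groupoid `Z₁ = ℝⁿ × ℝⁿ × ℝ₊` of formula (27). -/
noncomputable def Zcomp {n : ℕ}
    (z₁ z₂ : EuclideanSpace ℝ (Fin n) × EuclideanSpace ℝ (Fin n) × ℝ) : Prop :=
  z₂.1 = z₁.2.2 • z₁.1 - (2 / (1 + ‖z₁.1‖ ^ 2)) • z₁.2.1

/-- The groupoid multiplication of formula (27) on `Z₁ = ℝⁿ × ℝⁿ × ℝ₊`. -/
noncomputable def Zmul {n : ℕ}
    (z₁ z₂ : EuclideanSpace ℝ (Fin n) × EuclideanSpace ℝ (Fin n) × ℝ) :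
    EuclideanSpace ℝ (Fin n) × EuclideanSpace ℝ (Fin n) × ℝ :=
  (z₁.1, z₂.2.2 • z₁.2.1 + ((1 + ‖z₁.1‖ ^ 2) / (1 + ‖z₂.1‖ ^ 2)) • z₂.2.1,
    z₁.2.2 * z₂.2.2)

/-- The groupoid inverse `ŝ` of formula (27). -/
noncomputable def sHat {n : ℕ}
    (z : EuclideanSpace ℝ (Fin n) × EuclideanSpace ℝ (Fin n) × ℝ) :
    EuclideanSpace ℝ (Fin n) × EuclideanSpace ℝ (Fin n) × ℝ :=
  let x := z.1
  let v := z.2.1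
  let s := z.2.2
  let x' := s • x - (2 / (1 + ‖x‖ ^ 2)) • v
  (x', -((1 + ‖x'‖ ^ 2) / ((1 + ‖x‖ ^ 2) * s)) • v, 1 / s)

/-- In the groupoid `Z₁` of formula (27), every element `γ = (x, ẋ, s)` is composable
with its inverse `ŝ(γ)` and their product is the unit `(x, 0, 1)` at its left
projection. -/
theorem stmt11 {n : ℕ} (x v : EuclideanSpace ℝ (Fin n)) (s : ℝ) (hs : 0 < s) :
    Zcomp (x, v, s) (sHat (x, v, s)) ∧
    Zmul (x, v, s) (sHat (x, v, s)) = (x, (0 : EuclideanSpace ℝ (Fin n)), (1 : ℝ)) := by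
  set y := s • x - (2 / (1 + ‖x‖ ^ 2)) • v
  have hx : (1 : ℝ) + ‖x‖ ^ 2 ≠ 0 := by positivity
  have hy : (1 : ℝ) + ‖y‖ ^ 2 ≠ 0 := by positivity
  -- the conformal factors `1 + ‖x‖²` and `1 + ‖y‖²` cancel, leaving `1/s - 1/s`
  have hcoeff : 1 / s + (1 + ‖x‖ ^ 2) / (1 + ‖y‖ ^ 2) *
      -((1 + ‖y‖ ^ 2) / ((1 + ‖x‖ ^ 2) * s)) = 0 := by
    field_simp
    ring
  refine ⟨rfl, ?_⟩
  simp only [Zmul, sHat, Prod.mk.injEq, smul_smul, ← add_smul]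
  refine ⟨trivial, ?_, mul_one_div_cancel hs.ne'⟩
  exact (congrArg (· • v) hcoeff).trans (zero_smul ℝ v)
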